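/- Let q > 3 be an odd prime power and ζ a generator of F_q^×. Then SL₂(F_q) is generated by the two matrices r = [[ζ,0],[0,ζ⁻¹]] and s = [[1,−1],[1,0]]. -/

import Mathlib

/-!
Write `x(t)`, `y(t)` for the upper and lower transvections and `d(a) = diag(a, a⁻¹)`, so that
`r = d(ζ)` and `s = y(1) x(-1)`. Since `ζ` generates `F_q^×`, the closure `H` of `{r, s}`
contains every `d(a)`, and conjugation by `d(a)^{±1}` multiplies the parameter of `x(t)` and
of `y(t)` by `a²`. As every element of a finite field is a sum of two squares, `H` contains
all `x(t)` (resp. all `y(t)`) as soon as it contains one `x(c)` (resp. `y(c)`) with `c ≠ 0`.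
Such elements are `s r s⁻¹ r = x(1 - ζ⁻²)`, nonzero because `ζ` has order `q - 1 > 2`, and
then `y(1) = s x(1)`. Finally, transvections generate `SL₂`.
-/

open Matrix Polynomial
open scoped MatrixGroups

theorem FiniteField.exists_sq_add_sq {F : Type*} [Field F] [Fintype F] (x : F) :
    ∃ a b : F, a ^ 2 + b ^ 2 = x := by
  by_cases hF : ringChar F = 2
  · obtain ⟨a, rfl⟩ := isSquare_of_char_two hF x
    exact ⟨a, 0, by ring⟩
  · obtain ⟨a, b, hab⟩ := exists_root_sum_quadratic (degree_X_pow 2)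
      (degree_X_pow_sub_C two_pos x) (odd_card_of_char_ne_two hF)
    refine ⟨a, b, ?_⟩
    simp only [eval_pow, eval_sub, eval_C, eval_X] at hab
    linear_combination hab

namespace Matrix.SpecialLinearGroup

variable {F : Type*} [Field F]

theorem coe_transvection_zero_one (b : F) :
    ((transvection zero_ne_one b : SL(2, F)) : Matrix (Fin 2) (Fin 2) F) = !![1, b; 0, 1] := by
  ext i j; fin_cases i <;> fin_cases j <;> simp [transvection_coe]

theorem coe_transvection_one_zero (b : F) :
    ((transvection one_ne_zero b : SL(2, F)) : Matrix (Fin 2) (Fin 2) F) = !![1, 0; b, 1] := by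
  ext i j; fin_cases i <;> fin_cases j <;> simp [transvection_coe]

noncomputable def diag2Hom : Fˣ →* SL(2, F) where
  toFun u := diag2 u u.ne_zero
  map_one' := by ext i j; fin_cases i <;> fin_cases j <;> simp [diag2_coe']
  map_mul' u v := by ext i j; fin_cases i <;> fin_cases j <;> simp [diag2_coe', mul_comm]

theorem diag2_mul_transvection_mul_inv {a : F} (ha : a ≠ 0) (b : F) :
    diag2 a ha * transvection zero_ne_one b * (diag2 a ha)⁻¹ =
      transvection zero_ne_one (a ^ 2 * b) := by
  have h := commutator_diag2_transvection a ha b _ rfl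
  rw [commutatorElement_def, transvection_inv, ← eq_mul_inv_iff_mul_eq, transvection_inv,
    neg_neg, ← transvection_add] at h
  rw [h]
  ring_nf

theorem inv_diag2_mul_transvection_mul {a : F} (ha : a ≠ 0) (b : F) :
    (diag2 a ha)⁻¹ * transvection one_ne_zero b * diag2 a ha =
      transvection one_ne_zero (a ^ 2 * b) := by
  rw [diag2_inv]
  apply Subtype.ext
  simp only [coe_mul, diag2_coe', coe_transvection_one_zero, mul_fin_two, inv_inv]
  ext i j; fin_cases i <;> fin_cases j <;> simp <;> field_simp

theorem transvection_sq_mul_mem {H : Subgroup SL(2, F)} (hD : ∀ a ha, diag2 a ha ∈ H)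
    {i j : Fin 2} (hij : i ≠ j) {b : F} (hb : transvection hij b ∈ H) (a : F) :
    transvection hij (a ^ 2 * b) ∈ H := by
  rcases eq_or_ne a 0 with rfl | ha
  · simp [H.one_mem]
  fin_cases i <;> fin_cases j
  · exact absurd rfl hij
  · rw [← diag2_mul_transvection_mul_inv ha]
    exact mul_mem (mul_mem (hD a ha) hb) (inv_mem (hD a ha))
  · rw [← inv_diag2_mul_transvection_mul ha]
    exact mul_mem (mul_mem (inv_mem (hD a ha)) hb) (hD a ha)
  · exact absurd rfl hij

theorem transvection_mem_of_transvection_mem [Fintype F] {H : Subgroup SL(2, F)}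
    (hD : ∀ a ha, diag2 a ha ∈ H) {i j : Fin 2} (hij : i ≠ j) {c : F} (hc : c ≠ 0)
    (hT : transvection hij c ∈ H) (t : F) : transvection hij t ∈ H := by
  obtain ⟨a, b, hab⟩ := FiniteField.exists_sq_add_sq (t / c)
  have ht : t = a ^ 2 * c + b ^ 2 * c := by rw [← add_mul, hab, div_mul_cancel₀ t hc]
  rw [ht, transvection_add]
  exact mul_mem (transvection_sq_mul_mem hD hij hT a) (transvection_sq_mul_mem hD hij hT b)

theorem eq_top_of_transvection_mem {H : Subgroup SL(2, F)}
    (hU : ∀ t, transvection zero_ne_one t ∈ H) (hL : ∀ t, transvection one_ne_zero t ∈ H) :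
    H = ⊤ := by
  refine eq_top_iff.2 fun g _ ↦ SL2.transvection_induction (· ∈ H) ?_ (fun _ _ ↦ mul_mem) g
  intro i j hij t
  fin_cases i <;> fin_cases j
  exacts [absurd rfl hij, hU t, hL t, absurd rfl hij]

theorem eq_transvection_mul_transvection {s : SL(2, F)}
    (hs : (s : Matrix (Fin 2) (Fin 2) F) = !![1, -1; 1, 0]) :
    s = transvection one_ne_zero 1 * transvection zero_ne_one (-1) := by
  apply Subtype.ext
  rw [hs, coe_mul, coe_transvection_zero_one, coe_transvection_one_zero, mul_fin_two]
  norm_num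

theorem conj_diag2_mul_diag2_eq_transvection {a : F} (ha : a ≠ 0) :
    (transvection one_ne_zero 1 * transvection zero_ne_one (-1)) * diag2 a ha *
      (transvection one_ne_zero 1 * transvection zero_ne_one (-1))⁻¹ * diag2 a ha =
      transvection zero_ne_one (1 - a⁻¹ ^ 2) := by
  rw [_root_.mul_inv_rev, transvection_inv, transvection_inv]
  apply Subtype.ext
  simp only [coe_mul, diag2_coe', coe_transvection_one_zero, coe_transvection_zero_one,
    mul_fin_two]
  ext i j; fin_cases i <;> fin_cases j <;> simp [← sub_eq_add_neg] <;> field_simp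

end Matrix.SpecialLinearGroup

open Matrix.SpecialLinearGroup

theorem SL2_two_generated_general (F : Type*) [Field F] [Fintype F]
    (hq : 3 < Fintype.card F)
    (ζ : Fˣ) (hζ : ∀ x : Fˣ, x ∈ Subgroup.zpowers ζ)
    (r s : Matrix.SpecialLinearGroup (Fin 2) F)
    (hr : (r : Matrix (Fin 2) (Fin 2) F) = !![(ζ : F), 0; 0, ((ζ⁻¹ : Fˣ) : F)])
    (hs : (s : Matrix (Fin 2) (Fin 2) F) = !![1, -1; 1, 0]) :
    Subgroup.closure ({r, s} : Set (Matrix.SpecialLinearGroup (Fin 2) F)) = ⊤ := by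
  set H := Subgroup.closure ({r, s} : Set (Matrix.SpecialLinearGroup (Fin 2) F))
  have hrH : r ∈ H := Subgroup.subset_closure (by simp)
  have hsH : s ∈ H := Subgroup.subset_closure (by simp)
  have hr_diag : r = diag2Hom ζ := Subtype.ext <| hr.trans (by simp [diag2Hom, diag2_coe'])
  rw [eq_transvection_mul_transvection hs] at hsH
  have hD : ∀ a ha, diag2 a ha ∈ H := fun a ha ↦ by
    obtain ⟨k, hk⟩ := Subgroup.mem_zpowers_iff.1 (hζ (Units.mk0 a ha))
    have : diag2 a ha = r ^ k := by rw [hr_diag, ← map_zpow, hk]; rfl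
    exact this ▸ zpow_mem hrH k
  have hc : 1 - (ζ : F)⁻¹ ^ 2 ≠ 0 := by
    rw [sub_ne_zero, ne_comm, inv_pow, inv_ne_one, ← Units.val_pow_eq_pow_val, Ne,
      Units.val_eq_one]
    refine pow_ne_one_of_lt_orderOf two_ne_zero ?_
    rw [orderOf_eq_card_of_forall_mem_zpowers hζ, Nat.card_units, Nat.card_eq_fintype_card]
    omega
  have hxc : (transvection zero_ne_one (1 - (ζ : F)⁻¹ ^ 2) : SL(2, F)) ∈ H := by
    rw [← conj_diag2_mul_diag2_eq_transvection ζ.ne_zero]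
    exact mul_mem (mul_mem (mul_mem hsH (hD _ _)) (inv_mem hsH)) (hD _ _)
  have hx := transvection_mem_of_transvection_mem hD zero_ne_one hc hxc
  have hy₁ : (transvection one_ne_zero (1 : F) : SL(2, F)) ∈ H := by
    have h := mul_mem hsH (hx 1)
    rwa [mul_assoc, ← transvection_add, neg_add_cancel, transvection_coeff_zero, mul_one] at h
  exact eq_top_of_transvection_mem hx
    (transvection_mem_of_transvection_mem hD one_ne_zero one_ne_zero hy₁)

/-- For `q > 3` an odd prime power and `ζ` a generator of `F_q^×`, the group
`SL₂(F_q)` is generated by `r = [[ζ,0],[0,ζ⁻¹]]` and `s = [[1,−1],[1,0]]`. -/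
theorem SL2_two_generated (F : Type*) [Field F] [Fintype F]
    (hodd : Odd (Fintype.card F)) (hq : 3 < Fintype.card F)
    (ζ : Fˣ) (hζ : ∀ x : Fˣ, x ∈ Subgroup.zpowers ζ)
    (r s : Matrix.SpecialLinearGroup (Fin 2) F)
    (hr : (r : Matrix (Fin 2) (Fin 2) F) = !![(ζ : F), 0; 0, ((ζ⁻¹ : Fˣ) : F)])
    (hs : (s : Matrix (Fin 2) (Fin 2) F) = !![1, -1; 1, 0]) :
    Subgroup.closure ({r, s} : Set (Matrix.SpecialLinearGroup (Fin 2) F)) = ⊤ :=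
  SL2_two_generated_general F hq ζ hζ r s hr hs
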